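/- Let F₀, F₁, F₂ be smooth vector fields on ℝⁿ satisfying: F₀(p) = F₁(p) = 0; ∇F₀⁽¹⁾(p), ∇F₁⁽¹⁾(p) ∈ Span(e₁); and F₂⁽¹⁾(p) = 0. Let R₁ be the linear span in ℝⁿ of the values at p of all iterated Lie brackets of F₀ and F₂ in which F₂ appears at most once. Then R₁ ⊆ Span(e₂, …, eₙ), i.e., every vector in R₁ has zero first component. -/

import Mathlib

/-- Pointwise Lie bracket: `[g,h](x) = Dh(x) g(x) − Dg(x) h(x)`. -/
noncomputable def lieBracket {n : ℕ} (f g : (Fin n → ℝ) → (Fin n → ℝ)) :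
    (Fin n → ℝ) → (Fin n → ℝ) :=
  fun x => fderiv ℝ g x (f x) - fderiv ℝ f x (g x)

/-- Formal iterated Lie brackets of two vector fields `F0`, `F2`. -/
inductive Br2 : Type
  | f0 : Br2
  | f2 : Br2
  | node : Br2 → Br2 → Br2

/-- Number of leaves labeled `f2`. -/
def Br2.countF2 : Br2 → ℕ
  | Br2.f0 => 0
  | Br2.f2 => 1
  | Br2.node g h => Br2.countF2 g + Br2.countF2 h

/-- Evaluation of a formal bracket to an actual vector field. -/
noncomputable def Br2.eval {n : ℕ} (F0 F2 : (Fin n → ℝ) → (Fin n → ℝ)) :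
    Br2 → ((Fin n → ℝ) → (Fin n → ℝ))
  | Br2.f0 => F0
  | Br2.f2 => F2
  | Br2.node g h => lieBracket (Br2.eval F0 F2 g) (Br2.eval F0 F2 h)

lemma contDiff_lieBracket {n : ℕ} {f g : (Fin n → ℝ) → (Fin n → ℝ)}
    (hf : ContDiff ℝ (⊤ : ℕ∞) f) (hg : ContDiff ℝ (⊤ : ℕ∞) g) : ContDiff ℝ (⊤ : ℕ∞) (lieBracket f g) := by
  unfold lieBracket
  exact ((hg.fderiv_right (by simp)).clm_apply hf).sub ((hf.fderiv_right (by simp)).clm_apply hg)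

lemma ker_lemma {n : ℕ} (L : (Fin (n+1) → ℝ) →L[ℝ] ℝ)
    (h : ∀ i : Fin (n+1), i ≠ 0 → L (Pi.single i 1) = 0)
    (w : Fin (n+1) → ℝ) (hw : w 0 = 0) : L w = 0 := by
  have hrep : w = ∑ i, w i • (Pi.single i 1 : Fin (n+1) → ℝ) := by
    funext j
    simp [Finset.sum_apply, Pi.single_apply]
  rw [hrep, map_sum]
  apply Finset.sum_eq_zero
  intro i _
  rw [map_smul]
  by_cases hi : i = 0
  · subst hi; rw [hw]; simp
  · rw [h i hi]; simp

lemma fderiv_lieBracket_zero {n : ℕ} {g h : (Fin n → ℝ) → (Fin n → ℝ)}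
    (hg : ContDiff ℝ (⊤ : ℕ∞) g) (hh : ContDiff ℝ (⊤ : ℕ∞) h) (p : Fin n → ℝ)
    (hgp : g p = 0) (hhp : h p = 0) (w : Fin n → ℝ) :
    fderiv ℝ (lieBracket g h) p w =
      fderiv ℝ h p (fderiv ℝ g p w) - fderiv ℝ g p (fderiv ℝ h p w) := by
  have d1 : DifferentiableAt ℝ (fun x => fderiv ℝ h x (g x)) p :=
    (((hh.fderiv_right (by simp)).clm_apply hg).differentiable (by simp) p)
  have d2 : DifferentiableAt ℝ (fun x => fderiv ℝ g x (h x)) p :=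
    (((hg.fderiv_right (by simp)).clm_apply hh).differentiable (by simp) p)
  have e1 : fderiv ℝ (fun x => fderiv ℝ h x (g x)) p =
      (fderiv ℝ h p).comp (fderiv ℝ g p) + (fderiv ℝ (fderiv ℝ h) p).flip (g p) :=
    fderiv_clm_apply ((hh.fderiv_right (m := 1) (WithTop.coe_le_coe.mpr le_top)).differentiable (by simp) p)
      (hg.differentiable (by simp) p)
  have e2 : fderiv ℝ (fun x => fderiv ℝ g x (h x)) p =
      (fderiv ℝ g p).comp (fderiv ℝ h p) + (fderiv ℝ (fderiv ℝ g) p).flip (h p) :=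
    fderiv_clm_apply ((hg.fderiv_right (m := 1) (WithTop.coe_le_coe.mpr le_top)).differentiable (by simp) p)
      (hh.differentiable (by simp) p)
  have : lieBracket g h = fun x => (fun x => fderiv ℝ h x (g x)) x - (fun x => fderiv ℝ g x (h x)) x := rfl
  rw [this]
  rw [fderiv_fun_sub d1 d2]
  simp [e1, e2, hgp, hhp]

lemma Br2.eval_contDiff {n : ℕ} {F0 F2 : (Fin n → ℝ) → (Fin n → ℝ)}
    (hF0 : ContDiff ℝ (⊤ : ℕ∞) F0) (hF2 : ContDiff ℝ (⊤ : ℕ∞) F2) :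
    ∀ B : Br2, ContDiff ℝ (⊤ : ℕ∞) (B.eval F0 F2)
  | Br2.f0 => hF0
  | Br2.f2 => hF2
  | Br2.node g h => contDiff_lieBracket (eval_contDiff hF0 hF2 g) (eval_contDiff hF0 hF2 h)

lemma key_lemma {n : ℕ} {F0 F2 : (Fin (n+1) → ℝ) → (Fin (n+1) → ℝ)}
    (hF0 : ContDiff ℝ (⊤ : ℕ∞) F0) (hF2 : ContDiff ℝ (⊤ : ℕ∞) F2)
    (p : Fin (n+1) → ℝ) (hF0p : F0 p = 0)
    (hF0grad : ∀ i : Fin (n+1), i ≠ 0 →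
      fderiv ℝ (fun x => F0 x 0) p (Pi.single i 1) = 0)
    (hF21 : F2 p 0 = 0) :
    ∀ B : Br2,
      (B.countF2 = 0 → B.eval F0 F2 p = 0 ∧
        ∀ w, w 0 = 0 → fderiv ℝ (B.eval F0 F2) p w 0 = 0) ∧
      (B.countF2 ≤ 1 → B.eval F0 F2 p 0 = 0) := by
  intro B
  induction B with
  | f0 =>
    have hgrad : ∀ w, w 0 = 0 → fderiv ℝ F0 p w 0 = 0 := by
      have hcomp : fderiv ℝ (fun x => F0 x 0) p =
          (ContinuousLinearMap.proj (R := ℝ) (φ := fun _ : Fin (n+1) => ℝ) 0).comp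
            (fderiv ℝ F0 p) := by
        exact ((ContinuousLinearMap.proj (R := ℝ) (φ := fun _ : Fin (n+1) => ℝ)
          0).hasFDerivAt.comp p (hF0.differentiable (by simp) p).hasFDerivAt).fderiv
      intro w hw
      have := ker_lemma ((ContinuousLinearMap.proj (R := ℝ)
          (φ := fun _ : Fin (n+1) => ℝ) 0).comp (fderiv ℝ F0 p))
        (fun i hi => by rw [← hcomp]; exact hF0grad i hi) w hw
      simpa using this
    refine ⟨fun _ => ⟨hF0p, hgrad⟩, fun _ => by simp [Br2.eval, hF0p]⟩
  | f2 =>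
    exact ⟨fun h => by simp [Br2.countF2] at h, fun _ => hF21⟩
  | node g h ihg ihh =>
    constructor
    · intro hc
      simp only [Br2.countF2, Nat.add_eq_zero] at hc
      obtain ⟨hgp, hgw⟩ := ihg.1 hc.1
      obtain ⟨hhp, hhw⟩ := ihh.1 hc.2
      have hcg := Br2.eval_contDiff hF0 hF2 g
      have hch := Br2.eval_contDiff hF0 hF2 h
      constructor
      · show lieBracket _ _ p = 0
        unfold lieBracket
        simp [hgp, hhp]
      · intro w hw
        show fderiv ℝ (lieBracket _ _) p w 0 = 0
        rw [fderiv_lieBracket_zero hcg hch p hgp hhp w]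
        have h1 : (fderiv ℝ (g.eval F0 F2) p w) 0 = 0 := hgw w hw
        have h2 : (fderiv ℝ (h.eval F0 F2) p w) 0 = 0 := hhw w hw
        have := hhw _ h1
        have := hgw _ h2
        simp_all [Pi.sub_apply]
    · intro hc
      simp only [Br2.countF2] at hc
      have hcg := Br2.eval_contDiff hF0 hF2 g
      have hch := Br2.eval_contDiff hF0 hF2 h
      show lieBracket _ _ p 0 = 0
      unfold lieBracket
      rcases Nat.eq_zero_or_pos g.countF2 with hg0 | hgpos
      · obtain ⟨hgp, hgw⟩ := ihg.1 hg0
        have hhp0 : h.eval F0 F2 p 0 = 0 := ihh.2 (by omega)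
        simp [hgp, Pi.sub_apply, hgw _ hhp0]
      · have hh0 : h.countF2 = 0 := by omega
        obtain ⟨hhp, hhw⟩ := ihh.1 hh0
        have hgp0 : g.eval F0 F2 p 0 = 0 := ihg.2 (by omega)
        simp [hhp, Pi.sub_apply, hhw _ hgp0]

theorem stmt6 {n : ℕ} (F0 F1 F2 : (Fin (n+1) → ℝ) → (Fin (n+1) → ℝ))
    (hF0 : ContDiff ℝ (⊤ : ℕ∞) F0) (hF1 : ContDiff ℝ (⊤ : ℕ∞) F1) (hF2 : ContDiff ℝ (⊤ : ℕ∞) F2)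
    (p : Fin (n+1) → ℝ) (hF0p : F0 p = 0) (hF1p : F1 p = 0)
    (hF0grad : ∀ i : Fin (n+1), i ≠ 0 →
      fderiv ℝ (fun x => F0 x 0) p (Pi.single i 1) = 0)
    (hF1grad : ∀ i : Fin (n+1), i ≠ 0 →
      fderiv ℝ (fun x => F1 x 0) p (Pi.single i 1) = 0)
    (hF21 : F2 p 0 = 0) :
    ∀ v ∈ Submodule.span ℝ
        {v : Fin (n+1) → ℝ | ∃ B : Br2, B.countF2 ≤ 1 ∧ B.eval F0 F2 p = v},
      v 0 = 0 := by
  intro v hv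
  have hle : Submodule.span ℝ
      {v : Fin (n+1) → ℝ | ∃ B : Br2, B.countF2 ≤ 1 ∧ B.eval F0 F2 p = v} ≤
      LinearMap.ker (LinearMap.proj (R := ℝ) (φ := fun _ : Fin (n+1) => ℝ) 0) := by
    rw [Submodule.span_le]
    rintro w ⟨B, hB, rfl⟩
    exact (key_lemma hF0 hF2 p hF0p hF0grad hF21 B).2 hB
  exact hle hv
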